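/- arXiv:2212.02373 — 11 statements merged into one kernel-verified Lean document; each statement's English description precedes it below -/
import Mathlib

section
/- Each of the three maps φ01, φ02, φ12 maps L_t into L_{t+ρ}, preserves length (ℓ(φ(v)) = ℓ(v) for all v ∈ L_t), and restricts to a bijection from L_t onto L_{t+ρ}. -/
/-- The factorization homomorphism `π_t` for the shifted numerical semigroup
`M_t = ⟨t - d*a, t, t + d*b⟩`, applied to `v = (v0, v1, v2) ∈ ℤ³`. -/
def pi3 (a b d t : ℤ) (v : ℤ × ℤ × ℤ) : ℤ :=
  (t - d * a) * v.1 + t * v.2.1 + (t + d * b) * v.2.2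

/-- The length (coordinate sum) `ℓ(v)` of `v ∈ ℤ³`. -/
def len3 (v : ℤ × ℤ × ℤ) : ℤ := v.1 + v.2.1 + v.2.2

/-- The trade lattice `L_t = ker π_t`. -/
def L3 (a b d t : ℤ) : Set (ℤ × ℤ × ℤ) := {v | pi3 a b d t v = 0}

/-- The orthant `O⁺_t = {v ∈ L_t : v0 ≥ 0, v1 ≥ 0}`. -/
def OPlus (a b d t : ℤ) : Set (ℤ × ℤ × ℤ) :=
  {v ∈ L3 a b d t | 0 ≤ v.1 ∧ 0 ≤ v.2.1}

/-- The orthant `O±_t = {v ∈ L_t : v0 ≥ 0, v2 ≥ 0}`. -/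
def OPm (a b d t : ℤ) : Set (ℤ × ℤ × ℤ) :=
  {v ∈ L3 a b d t | 0 ≤ v.1 ∧ 0 ≤ v.2.2}

/-- The orthant `O⁻_t = {v ∈ L_t : v1 ≥ 0, v2 ≥ 0}`. -/
def OMinus (a b d t : ℤ) : Set (ℤ × ℤ × ℤ) :=
  {v ∈ L3 a b d t | 0 ≤ v.2.1 ∧ 0 ≤ v.2.2}

/-- `φ01(v) = v + b*(a+b)*ℓ(v)*(1, -1, 0)`. -/
def phi01 (a b : ℤ) (v : ℤ × ℤ × ℤ) : ℤ × ℤ × ℤ :=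
  v + (b * (a + b) * len3 v) • ((1 : ℤ), (-1 : ℤ), (0 : ℤ))

/-- `φ02(v) = v + a*b*ℓ(v)*(1, 0, -1)`. -/
def phi02 (a b : ℤ) (v : ℤ × ℤ × ℤ) : ℤ × ℤ × ℤ :=
  v + (a * b * len3 v) • ((1 : ℤ), (0 : ℤ), (-1 : ℤ))

/-- `φ12(v) = v + a*(a+b)*ℓ(v)*(0, 1, -1)`. -/
def phi12 (a b : ℤ) (v : ℤ × ℤ × ℤ) : ℤ × ℤ × ℤ :=
  v + (a * (a + b) * len3 v) • ((0 : ℤ), (1 : ℤ), (-1 : ℤ))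

/-- `v` is reducible in the orthant `O` if it is a sum of two nonzero elements of `O`. -/
def Reducible (O : Set (ℤ × ℤ × ℤ)) (v : ℤ × ℤ × ℤ) : Prop :=
  ∃ u w : ℤ × ℤ × ℤ, u ∈ O ∧ w ∈ O ∧ u ≠ 0 ∧ w ≠ 0 ∧ v = u + w

/-- The Hilbert basis of the orthant `O`: its irreducible elements. -/
def HB (O : Set (ℤ × ℤ × ℤ)) : Set (ℤ × ℤ × ℤ) :=
  {v ∈ O | v ≠ 0 ∧ ¬ Reducible O v}

/-- `Ŝ_t = {v ∈ O±_t : v0 ≤ b or v2 ≤ a}`. -/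
def Shat (a b d t : ℤ) : Set (ℤ × ℤ × ℤ) :=
  {v ∈ OPm a b d t | v.1 ≤ b ∨ v.2.2 ≤ a}

/-- The piecewise map `φ̂`, given by `φ12` when `v0 ≤ b`, and `φ01` otherwise. -/
def phihat (a b : ℤ) (v : ℤ × ℤ × ℤ) : ℤ × ℤ × ℤ :=
  if v.1 ≤ b then phi12 a b v else phi01 a b v

def psi01 (a b : ℤ) (v : ℤ × ℤ × ℤ) : ℤ × ℤ × ℤ :=
  v - (b * (a + b) * len3 v) • ((1 : ℤ), (-1 : ℤ), (0 : ℤ))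

def psi02 (a b : ℤ) (v : ℤ × ℤ × ℤ) : ℤ × ℤ × ℤ :=
  v - (a * b * len3 v) • ((1 : ℤ), (0 : ℤ), (-1 : ℤ))

def psi12 (a b : ℤ) (v : ℤ × ℤ × ℤ) : ℤ × ℤ × ℤ :=
  v - (a * (a + b) * len3 v) • ((0 : ℤ), (1 : ℤ), (-1 : ℤ))

lemma psi_phi01 (a b : ℤ) (v : ℤ × ℤ × ℤ) : psi01 a b (phi01 a b v) = v := by
  obtain ⟨v1, v2, v3⟩ := v
  simp only [phi01, psi01, len3, Prod.smul_mk, smul_eq_mul, Prod.mk_add_mk, Prod.mk_sub_mk,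
    Prod.mk.injEq]
  refine ⟨by ring, by ring, by ring⟩

lemma phi_psi01 (a b : ℤ) (v : ℤ × ℤ × ℤ) : phi01 a b (psi01 a b v) = v := by
  obtain ⟨v1, v2, v3⟩ := v
  simp only [phi01, psi01, len3, Prod.smul_mk, smul_eq_mul, Prod.mk_add_mk, Prod.mk_sub_mk,
    Prod.mk.injEq]
  refine ⟨by ring, by ring, by ring⟩

lemma psi_phi02 (a b : ℤ) (v : ℤ × ℤ × ℤ) : psi02 a b (phi02 a b v) = v := by
  obtain ⟨v1, v2, v3⟩ := v
  simp only [phi02, psi02, len3, Prod.smul_mk, smul_eq_mul, Prod.mk_add_mk, Prod.mk_sub_mk,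
    Prod.mk.injEq]
  refine ⟨by ring, by ring, by ring⟩

lemma phi_psi02 (a b : ℤ) (v : ℤ × ℤ × ℤ) : phi02 a b (psi02 a b v) = v := by
  obtain ⟨v1, v2, v3⟩ := v
  simp only [phi02, psi02, len3, Prod.smul_mk, smul_eq_mul, Prod.mk_add_mk, Prod.mk_sub_mk,
    Prod.mk.injEq]
  refine ⟨by ring, by ring, by ring⟩

lemma psi_phi12 (a b : ℤ) (v : ℤ × ℤ × ℤ) : psi12 a b (phi12 a b v) = v := by
  obtain ⟨v1, v2, v3⟩ := v
  simp only [phi12, psi12, len3, Prod.smul_mk, smul_eq_mul, Prod.mk_add_mk, Prod.mk_sub_mk,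
    Prod.mk.injEq]
  refine ⟨by ring, by ring, by ring⟩

lemma phi_psi12 (a b : ℤ) (v : ℤ × ℤ × ℤ) : phi12 a b (psi12 a b v) = v := by
  obtain ⟨v1, v2, v3⟩ := v
  simp only [phi12, psi12, len3, Prod.smul_mk, smul_eq_mul, Prod.mk_add_mk, Prod.mk_sub_mk,
    Prod.mk.injEq]
  refine ⟨by ring, by ring, by ring⟩

lemma len_phi01 (a b : ℤ) (v : ℤ × ℤ × ℤ) : len3 (phi01 a b v) = len3 v := by
  obtain ⟨v1, v2, v3⟩ := v
  simp only [phi01, len3, Prod.smul_mk, smul_eq_mul, Prod.mk_add_mk]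
  ring

lemma len_phi02 (a b : ℤ) (v : ℤ × ℤ × ℤ) : len3 (phi02 a b v) = len3 v := by
  obtain ⟨v1, v2, v3⟩ := v
  simp only [phi02, len3, Prod.smul_mk, smul_eq_mul, Prod.mk_add_mk]
  ring

lemma len_phi12 (a b : ℤ) (v : ℤ × ℤ × ℤ) : len3 (phi12 a b v) = len3 v := by
  obtain ⟨v1, v2, v3⟩ := v
  simp only [phi12, len3, Prod.smul_mk, smul_eq_mul, Prod.mk_add_mk]
  ring

lemma mem_phi01 (a b d t : ℤ) {v : ℤ × ℤ × ℤ} (hv : v ∈ L3 a b d t) :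
    phi01 a b v ∈ L3 a b d (t + d * a * b * (a + b)) := by
  obtain ⟨v1, v2, v3⟩ := v
  simp only [L3, pi3, phi01, len3, Prod.smul_mk, smul_eq_mul, Prod.mk_add_mk,
    Set.mem_setOf_eq] at hv ⊢
  linear_combination hv

lemma mem_phi02 (a b d t : ℤ) {v : ℤ × ℤ × ℤ} (hv : v ∈ L3 a b d t) :
    phi02 a b v ∈ L3 a b d (t + d * a * b * (a + b)) := by
  obtain ⟨v1, v2, v3⟩ := v
  simp only [L3, pi3, phi02, len3, Prod.smul_mk, smul_eq_mul, Prod.mk_add_mk,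
    Set.mem_setOf_eq] at hv ⊢
  linear_combination hv

lemma mem_phi12 (a b d t : ℤ) {v : ℤ × ℤ × ℤ} (hv : v ∈ L3 a b d t) :
    phi12 a b v ∈ L3 a b d (t + d * a * b * (a + b)) := by
  obtain ⟨v1, v2, v3⟩ := v
  simp only [L3, pi3, phi12, len3, Prod.smul_mk, smul_eq_mul, Prod.mk_add_mk,
    Set.mem_setOf_eq] at hv ⊢
  linear_combination hv

lemma mem_psi01 (a b d t : ℤ) {w : ℤ × ℤ × ℤ}
    (hw : w ∈ L3 a b d (t + d * a * b * (a + b))) : psi01 a b w ∈ L3 a b d t := by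
  obtain ⟨w1, w2, w3⟩ := w
  simp only [L3, pi3, psi01, len3, Prod.smul_mk, smul_eq_mul, Prod.mk_sub_mk,
    Set.mem_setOf_eq] at hw ⊢
  linear_combination hw

lemma mem_psi02 (a b d t : ℤ) {w : ℤ × ℤ × ℤ}
    (hw : w ∈ L3 a b d (t + d * a * b * (a + b))) : psi02 a b w ∈ L3 a b d t := by
  obtain ⟨w1, w2, w3⟩ := w
  simp only [L3, pi3, psi02, len3, Prod.smul_mk, smul_eq_mul, Prod.mk_sub_mk,
    Set.mem_setOf_eq] at hw ⊢
  linear_combination hw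

lemma mem_psi12 (a b d t : ℤ) {w : ℤ × ℤ × ℤ}
    (hw : w ∈ L3 a b d (t + d * a * b * (a + b))) : psi12 a b w ∈ L3 a b d t := by
  obtain ⟨w1, w2, w3⟩ := w
  simp only [L3, pi3, psi12, len3, Prod.smul_mk, smul_eq_mul, Prod.mk_sub_mk,
    Set.mem_setOf_eq] at hw ⊢
  linear_combination hw

theorem phi_maps_lattice_bijectively (a b d t : ℤ) (ha : 1 ≤ a) (hb : 1 ≤ b) (hd : 1 ≤ d)
    (hab : Int.gcd a b = 1) (ht : d * a < t) (htd : Int.gcd t d = 1) :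
    (∀ v ∈ L3 a b d t,
        phi01 a b v ∈ L3 a b d (t + d * a * b * (a + b)) ∧
        len3 (phi01 a b v) = len3 v) ∧
    Set.BijOn (phi01 a b) (L3 a b d t) (L3 a b d (t + d * a * b * (a + b))) ∧
    (∀ v ∈ L3 a b d t,
        phi02 a b v ∈ L3 a b d (t + d * a * b * (a + b)) ∧
        len3 (phi02 a b v) = len3 v) ∧
    Set.BijOn (phi02 a b) (L3 a b d t) (L3 a b d (t + d * a * b * (a + b))) ∧
    (∀ v ∈ L3 a b d t,
        phi12 a b v ∈ L3 a b d (t + d * a * b * (a + b)) ∧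
        len3 (phi12 a b v) = len3 v) ∧
    Set.BijOn (phi12 a b) (L3 a b d t) (L3 a b d (t + d * a * b * (a + b))) := by
  refine ⟨fun v hv => ⟨mem_phi01 a b d t hv, len_phi01 a b v⟩,
    ⟨fun v hv => mem_phi01 a b d t hv,
     (Function.LeftInverse.injective (psi_phi01 a b)).injOn,
     fun w hw => ⟨psi01 a b w, mem_psi01 a b d t hw, phi_psi01 a b w⟩⟩,
    fun v hv => ⟨mem_phi02 a b d t hv, len_phi02 a b v⟩,
    ⟨fun v hv => mem_phi02 a b d t hv,
     (Function.LeftInverse.injective (psi_phi02 a b)).injOn,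
     fun w hw => ⟨psi02 a b w, mem_psi02 a b d t hw, phi_psi02 a b w⟩⟩,
    fun v hv => ⟨mem_phi12 a b d t hv, len_phi12 a b v⟩,
    ⟨fun v hv => mem_phi12 a b d t hv,
     (Function.LeftInverse.injective (psi_phi12 a b)).injOn,
     fun w hw => ⟨psi12 a b w, mem_psi12 a b d t hw, phi_psi12 a b w⟩⟩⟩
end

section
/- Suppose t > d*a*b and v = (v0, v1, v2) ∈ O±_t. Then: (a) if v0 ≤ b, then ℓ(v) ≤ 0; (b) if v2 ≤ a, then ℓ(v) ≥ 0; and (c) if v ≠ 0, then v = h if and only if v0 ≤ b and v2 ≤ a. -/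
theorem pnp_lengths (a b d t : ℤ) (ha : 1 ≤ a) (hb : 1 ≤ b) (hd : 1 ≤ d)
    (hab : Int.gcd a b = 1) (ht : d * a < t) (htd : Int.gcd t d = 1)
    (hBpm : d * a * b < t) (v : ℤ × ℤ × ℤ) (hv : v ∈ OPm a b d t) :
    (v.1 ≤ b → len3 v ≤ 0) ∧
    (v.2.2 ≤ a → 0 ≤ len3 v) ∧
    (v ≠ 0 → (v = ((b, -(a + b), a) : ℤ × ℤ × ℤ) ↔ v.1 ≤ b ∧ v.2.2 ≤ a)) := by

  obtain ⟨x, y, z⟩ := v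
  obtain ⟨hL, hx, hz⟩ := hv
  simp only [L3, pi3, Set.mem_setOf_eq] at hL
  simp only [len3] at *
  have key : t * (x + y + z) = d * (a * x - b * z) := by linear_combination hL
  have htpos : 0 < t := by nlinarith
  have parta : x ≤ b → x + y + z ≤ 0 := by
    intro hxb
    by_contra h
    push_neg at h
    have h1 : 1 ≤ x + y + z := h
    nlinarith [mul_le_mul_of_nonneg_left h1 htpos.le,
      mul_nonneg (mul_nonneg (by linarith : (0:ℤ) ≤ d) (by linarith : (0:ℤ) ≤ b)) hz,
      mul_le_mul_of_nonneg_left (mul_le_mul_of_nonneg_left hxb (by linarith : (0:ℤ) ≤ a))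
        (by linarith : (0:ℤ) ≤ d)]
  have partb : z ≤ a → 0 ≤ x + y + z := by
    intro hza
    by_contra h
    push_neg at h
    have h1 : x + y + z ≤ -1 := by linarith
    nlinarith [mul_le_mul_of_nonneg_left h1 htpos.le,
      mul_nonneg (mul_nonneg (by linarith : (0:ℤ) ≤ d) (by linarith : (0:ℤ) ≤ a)) hx,
      mul_le_mul_of_nonneg_left (mul_le_mul_of_nonneg_left hza (by linarith : (0:ℤ) ≤ b))
        (by linarith : (0:ℤ) ≤ d)]
  refine ⟨parta, partb, fun hne => ⟨fun hv => ?_, fun ⟨hxb, hza⟩ => ?_⟩⟩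
  · rw [Prod.ext_iff, Prod.ext_iff] at hv
    obtain ⟨h1, h2, h3⟩ := hv
    simp at h1 h2 h3
    constructor <;> simp [h1, h3]
  · have hl0 : x + y + z = 0 := le_antisymm (parta hxb) (partb hza)
    rw [hl0, mul_zero] at key
    have hd0 : d ≠ 0 := by positivity
    have haxz : a * x = b * z := by
      have := (mul_eq_zero.mp key.symm).resolve_left hd0
      linarith
    have hadvd : a ∣ z := by
      have h1 : a ∣ b * z := ⟨x, haxz.symm⟩
      exact (Int.isCoprime_iff_gcd_eq_one.mpr hab).dvd_of_dvd_mul_left h1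
    obtain ⟨k, hk⟩ := hadvd
    have hk0 : 0 ≤ k := by nlinarith
    have hk1 : k ≤ 1 := by nlinarith
    interval_cases k
    · exfalso
      have hz0 : z = 0 := by omega
      have hx0 : x = 0 := by nlinarith
      exact hne (by simp [Prod.ext_iff, hx0, hz0]; omega)
    · have hza' : z = a := by omega
      have hxb' : x = b := by nlinarith
      simp [Prod.ext_iff, hxb', hza']
      omega
end

section
/- If t > d*a*b, then h = (b, −(a+b), a) is irreducible in O±_t; that is, h ∈ O±_t, h ≠ 0, and there do not exist nonzero u, w ∈ O±_t with h = u + w. -/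
lemma key_lemma (a b d t : ℤ) (ha : 1 ≤ a) (hb : 1 ≤ b) (hd : 1 ≤ d)
    (hab : Int.gcd a b = 1) (ht : d * a < t) (htd : Int.gcd t d = 1)
    (hBpm : d * a * b < t) (v : ℤ × ℤ × ℤ) (hv : v ∈ OPm a b d t)
    (hv1 : v.1 ≤ b) (hv3 : v.2.2 ≤ a) :
    v = 0 ∨ (v.1 = b ∧ v.2.2 = a) := by
  obtain ⟨hL, h1, h3⟩ := hv
  have hpi : (t - d * a) * v.1 + t * v.2.1 + (t + d * b) * v.2.2 = 0 := hL
  have ht0 : 0 < t := lt_of_le_of_lt (by positivity) ht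
  have hkey : t * (v.1 + v.2.1 + v.2.2) = d * (a * v.1 - b * v.2.2) := by ring_nf; linarith [hpi]
  have hdvd : t ∣ d * (a * v.1 - b * v.2.2) := ⟨_, hkey.symm⟩
  have hcop : IsCoprime t d := Int.isCoprime_iff_gcd_eq_one.mpr htd
  have hdvd2 : t ∣ (a * v.1 - b * v.2.2) := hcop.dvd_of_dvd_mul_left hdvd
  have habs : |a * v.1 - b * v.2.2| < t := by
    rw [abs_lt]
    have hav : 0 ≤ a * v.1 := mul_nonneg (by omega) h1
    have hbv : 0 ≤ b * v.2.2 := mul_nonneg (by omega) h3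
    have h1' : a * v.1 ≤ a * b := by nlinarith
    have h2' : b * v.2.2 ≤ a * b := by nlinarith
    have h3' : a * b ≤ d * a * b := by nlinarith
    constructor <;> nlinarith
  have hzero : a * v.1 - b * v.2.2 = 0 := Int.eq_zero_of_abs_lt_dvd hdvd2 habs
  have hlen : v.1 + v.2.1 + v.2.2 = 0 := by
    have := hkey
    rw [hzero, mul_zero] at this
    exact (mul_eq_zero.mp this).resolve_left (by omega)
  have heq : a * v.1 = b * v.2.2 := by linarith
  have hcab : IsCoprime a b := Int.isCoprime_iff_gcd_eq_one.mpr hab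
  have hbdvd : b ∣ v.1 := by
    have : b ∣ a * v.1 := ⟨v.2.2, heq⟩
    exact (hcab.symm.dvd_of_dvd_mul_left this)
  rcases hbdvd with ⟨k, hk⟩
  have hbpos : 0 < b := by omega
  have hk0 : 0 ≤ k := le_of_mul_le_mul_left (show b * 0 ≤ b * k by rw [mul_zero, ← hk]; exact h1) hbpos
  have hk1 : k ≤ 1 := le_of_mul_le_mul_left (show b * k ≤ b * 1 by rw [mul_one, ← hk]; exact hv1) hbpos
  have hk01 : k = 0 ∨ k = 1 := by omega
  rcases hk01 with h | h
  · left
    have hv10 : v.1 = 0 := by rw [hk, h, mul_zero]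
    have hv30 : v.2.2 = 0 := by nlinarith
    have : v.2.1 = 0 := by omega
    exact Prod.ext hv10 (Prod.ext this hv30)
  · right
    have hv1b : v.1 = b := by rw [hk, h, mul_one]
    constructor
    · exact hv1b
    · nlinarith

theorem h_irreducible (a b d t : ℤ) (ha : 1 ≤ a) (hb : 1 ≤ b) (hd : 1 ≤ d)
    (hab : Int.gcd a b = 1) (ht : d * a < t) (htd : Int.gcd t d = 1)
    (hBpm : d * a * b < t) :
    ((b, -(a + b), a) : ℤ × ℤ × ℤ) ∈ OPm a b d t ∧
    ((b, -(a + b), a) : ℤ × ℤ × ℤ) ≠ 0 ∧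
    ¬ Reducible (OPm a b d t) ((b, -(a + b), a) : ℤ × ℤ × ℤ) := by

  have hinO : ((b, -(a + b), a) : ℤ × ℤ × ℤ) ∈ OPm a b d t := by
    refine ⟨?_, by simpa using hb.trans' zero_le_one, by simpa using ha.trans' zero_le_one⟩
    show (t - d * a) * b + t * (-(a + b)) + (t + d * b) * a = 0
    ring
  refine ⟨hinO, ?_, ?_⟩
  · intro hcon
    rw [Prod.ext_iff] at hcon
    have : b = 0 := hcon.1
    omega
  · rintro ⟨u, w, hu, hw, hu0, hw0, heq⟩
    rw [Prod.ext_iff, Prod.ext_iff] at heq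
    obtain ⟨e1, e2, e3⟩ := heq
    simp only [Prod.fst_add, Prod.snd_add] at e1 e2 e3
    have hu1b : u.1 ≤ b := by have := hw.2.1; omega
    have hu3a : u.2.2 ≤ a := by have := hw.2.2; omega
    rcases key_lemma a b d t ha hb hd hab ht htd hBpm u hu hu1b hu3a with h | h
    · exact hu0 h
    · have hw1 : w.1 = 0 := by omega
      have hw3 : w.2.2 = 0 := by omega
      rcases key_lemma a b d t ha hb hd hab ht htd hBpm w hw (by omega) (by omega) with h' | h'
      · exact hw0 h'
      · omega
end

section
/- Let t = d*a*b (so t > d*a since b ≥ 2). Then h = (b, −(a+b), a) is reducible in O±_t: the vectors u = (b, −(b−1), 0) and w = (0, −(a+1), a) are nonzero, satisfy π_t(u) = π_t(w) = 0, have u0, u2, w0, w2 ≥ 0, and satisfy h = u + w. -/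
theorem h_reducible_at_bound (a b d : ℤ) (ha : 1 ≤ a) (hb : 2 ≤ b) (hd : 1 ≤ d)
    (hab : Int.gcd a b = 1) :
    ((b, -(b - 1), 0) : ℤ × ℤ × ℤ) ≠ 0 ∧
    ((0, -(a + 1), a) : ℤ × ℤ × ℤ) ≠ 0 ∧
    pi3 a b d (d * a * b) ((b, -(b - 1), 0) : ℤ × ℤ × ℤ) = 0 ∧
    pi3 a b d (d * a * b) ((0, -(a + 1), a) : ℤ × ℤ × ℤ) = 0 ∧
    (0 : ℤ) ≤ ((b, -(b - 1), 0) : ℤ × ℤ × ℤ).1 ∧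
    (0 : ℤ) ≤ ((b, -(b - 1), 0) : ℤ × ℤ × ℤ).2.2 ∧
    (0 : ℤ) ≤ ((0, -(a + 1), a) : ℤ × ℤ × ℤ).1 ∧
    (0 : ℤ) ≤ ((0, -(a + 1), a) : ℤ × ℤ × ℤ).2.2 ∧
    ((b, -(a + b), a) : ℤ × ℤ × ℤ) =
      ((b, -(b - 1), 0) : ℤ × ℤ × ℤ) + ((0, -(a + 1), a) : ℤ × ℤ × ℤ) := by
  refine ⟨?_, ?_, ?_, ?_, by positivity, le_refl _, le_refl _, by linarith, ?_⟩
  · intro h; have := congrArg Prod.fst h; simp at this; omega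
  · intro h; have := congrArg (fun v => v.2.1) h; simp at this; omega
  · simp [pi3]; ring
  · simp [pi3]; ring
  · simp [Prod.ext_iff]; ring
end

section
/- Suppose t > d*a*b. Let Ŝ_t = {v ∈ O±_t : v0 ≤ b or v2 ≤ a}, and define φ̂ : Ŝ_t → ℤ³ by φ̂(v) = φ12(v) if v0 ≤ b and φ̂(v) = φ01(v) if v2 ≤ a (these two formulas agree whenever both conditions hold). Then φ̂ is a well-defined bijection from Ŝ_t onto Ŝ_{t+ρ}. -/
lemma phi12_eq (a b : ℤ) (v : ℤ × ℤ × ℤ) :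
    phi12 a b v = (v.1, v.2.1 + a*(a+b)*len3 v, v.2.2 - a*(a+b)*len3 v) := by
  simp [phi12, Prod.ext_iff, len3]; ring

lemma phi01_eq (a b : ℤ) (v : ℤ × ℤ × ℤ) :
    phi01 a b v = (v.1 + b*(a+b)*len3 v, v.2.1 - b*(a+b)*len3 v, v.2.2) := by
  simp [phi01, Prod.ext_iff, len3]; ring

/-- key identity: π_{t+ρ}(φ12 v) = π_t(v) -/
lemma pi3_phi12 (a b d t : ℤ) (v : ℤ × ℤ × ℤ) :
    pi3 a b d (t + d*a*b*(a+b)) (phi12 a b v) = pi3 a b d t v := by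
  rw [phi12_eq]; simp [pi3, len3]; ring

lemma pi3_phi01 (a b d t : ℤ) (v : ℤ × ℤ × ℤ) :
    pi3 a b d (t + d*a*b*(a+b)) (phi01 a b v) = pi3 a b d t v := by
  rw [phi01_eq]; simp [pi3, len3]; ring

/-- From membership in the lattice: s * ℓ(v) = d*a*v0 - d*b*v2. -/
lemma key_of_L3 {a b d s : ℤ} {v : ℤ × ℤ × ℤ} (h : pi3 a b d s v = 0) :
    s * len3 v = d*a*v.1 - d*b*v.2.2 := by
  simp only [pi3] at h; simp only [len3]; linarith [h]

lemma ell_le_zero {a b d s : ℤ} (ha : 1 ≤ a) (hb : 1 ≤ b) (hd : 1 ≤ d)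
    (hs : d*a*b < s) {l v0 v2 : ℤ} (hkey : s * l = d*a*v0 - d*b*v2)
    (h2 : 0 ≤ v2) (hvb : v0 ≤ b) : l ≤ 0 := by
  have hs0 : 0 < s := lt_of_le_of_lt (by positivity) hs
  by_contra h
  push_neg at h
  have h1 : 1 ≤ l := h
  have : s * 1 ≤ s * l := mul_le_mul_of_nonneg_left h1 (le_of_lt hs0)
  nlinarith [mul_le_mul_of_nonneg_left hvb (show (0:ℤ) ≤ d*a by positivity),
    mul_nonneg (show (0:ℤ) ≤ d*b by positivity) h2]

lemma ell_ge_zero {a b d s : ℤ} (ha : 1 ≤ a) (hb : 1 ≤ b) (hd : 1 ≤ d)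
    (hs : d*a*b < s) {l v0 v2 : ℤ} (hkey : s * l = d*a*v0 - d*b*v2)
    (h0 : 0 ≤ v0) (hva : v2 ≤ a) : 0 ≤ l := by
  have hs0 : 0 < s := lt_of_le_of_lt (by positivity) hs
  by_contra h
  push_neg at h
  have h1 : l ≤ -1 := by omega
  have : s * l ≤ s * (-1) := mul_le_mul_of_nonneg_left h1 (le_of_lt hs0)
  nlinarith [mul_le_mul_of_nonneg_left hva (show (0:ℤ) ≤ d*b by positivity),
    mul_nonneg (show (0:ℤ) ≤ d*a by positivity) h0]

theorem phihat_bijection (a b d t : ℤ) (ha : 1 ≤ a) (hb : 1 ≤ b) (hd : 1 ≤ d)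
    (hab : Int.gcd a b = 1) (ht : d * a < t) (htd : Int.gcd t d = 1)
    (hBpm : d * a * b < t) :
    (∀ v ∈ Shat a b d t, v.1 ≤ b → v.2.2 ≤ a → phi12 a b v = phi01 a b v) ∧
    Set.BijOn (phihat a b) (Shat a b d t) (Shat a b d (t + d * a * b * (a + b))) := by
  have ht0 : 0 < t := lt_of_le_of_lt (by positivity) hBpm
  have hrho : (0:ℤ) < d*a*b*(a+b) := by positivity
  have hBpm' : d*a*b < t + d*a*b*(a+b) := by linarith
  have hzero : ∀ v ∈ Shat a b d t, v.1 ≤ b → v.2.2 ≤ a → len3 v = 0 := by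
    rintro v ⟨⟨hL, h0, h2⟩, -⟩ hvb hva
    have hkey := key_of_L3 (a := a) (b := b) (d := d) (s := t) hL
    have := ell_le_zero ha hb hd hBpm hkey h2 hvb
    have := ell_ge_zero ha hb hd hBpm hkey h0 hva
    omega
  constructor
  · intro v hv hvb hva
    rw [phi12_eq, phi01_eq, hzero v hv hvb hva]
    simp
  refine ⟨?_, ?_, ?_⟩
  · -- MapsTo
    rintro ⟨v0, v1, v2⟩ ⟨⟨hL, h0, h2⟩, hor⟩
    simp only at h0 h2 hor
    have hkey := key_of_L3 (a := a) (b := b) (d := d) (s := t) hL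
    simp only [len3] at hkey
    unfold phihat
    simp only
    split_ifs with hvb
    · have hl : v0 + v1 + v2 ≤ 0 := ell_le_zero ha hb hd hBpm hkey h2 hvb
      have hpi : pi3 a b d (t + d*a*b*(a+b)) (phi12 a b (v0,v1,v2)) = 0 := by
        rw [pi3_phi12]; exact hL
      refine ⟨⟨hpi, ?_, ?_⟩, Or.inl ?_⟩ <;> rw [phi12_eq] <;> simp only [len3]
      · exact h0
      · nlinarith [mul_nonpos_of_nonneg_of_nonpos
          (show (0:ℤ) ≤ a*(a+b) by positivity) hl]
      · exact hvb
    · have hva : v2 ≤ a := hor.resolve_left hvb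
      have hl : 0 ≤ v0 + v1 + v2 := ell_ge_zero ha hb hd hBpm hkey h0 hva
      have hpi : pi3 a b d (t + d*a*b*(a+b)) (phi01 a b (v0,v1,v2)) = 0 := by
        rw [pi3_phi01]; exact hL
      refine ⟨⟨hpi, ?_, ?_⟩, Or.inr ?_⟩ <;> rw [phi01_eq] <;> simp only [len3]
      · nlinarith [mul_nonneg (show (0:ℤ) ≤ b*(a+b) by positivity) hl]
      · exact h2
      · exact hva
  · -- InjOn
    rintro ⟨u0, u1, u2⟩ ⟨⟨huL, hu0, hu2⟩, huor⟩ ⟨v0, v1, v2⟩ ⟨⟨hvL, hv0, hv2⟩, hvor⟩ heq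
    simp only at hu0 hu2 huor hv0 hv2 hvor
    have hukey := key_of_L3 (a := a) (b := b) (d := d) (s := t) huL
    have hvkey := key_of_L3 (a := a) (b := b) (d := d) (s := t) hvL
    simp only [len3] at hukey hvkey
    unfold phihat at heq
    simp only at heq
    split_ifs at heq with h1 h2 h2
    · simp only [phi12_eq, len3, Prod.mk.injEq] at heq
      obtain ⟨e1, e2, e3⟩ := heq
      have hlen : u0 + u1 + u2 = v0 + v1 + v2 := by linarith
      simp only [Prod.mk.injEq]
      refine ⟨e1, by linear_combination e2 - a*(a+b)*hlen,
        by linear_combination e3 + a*(a+b)*hlen⟩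
    · exfalso
      have hva : v2 ≤ a := hvor.resolve_left h2
      have hlv : 0 ≤ v0 + v1 + v2 := ell_ge_zero ha hb hd hBpm hvkey hv0 hva
      simp only [phi12_eq, phi01_eq, len3, Prod.mk.injEq] at heq
      push_neg at h2
      nlinarith [mul_nonneg (show (0:ℤ) ≤ b*(a+b) by positivity) hlv, heq.1]
    · exfalso
      have hua : u2 ≤ a := huor.resolve_left h1
      have hlu : 0 ≤ u0 + u1 + u2 := ell_ge_zero ha hb hd hBpm hukey hu0 hua
      simp only [phi12_eq, phi01_eq, len3, Prod.mk.injEq] at heq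
      push_neg at h1
      nlinarith [mul_nonneg (show (0:ℤ) ≤ b*(a+b) by positivity) hlu, heq.1]
    · simp only [phi01_eq, len3, Prod.mk.injEq] at heq
      obtain ⟨e1, e2, e3⟩ := heq
      have hlen : u0 + u1 + u2 = v0 + v1 + v2 := by linarith
      simp only [Prod.mk.injEq]
      refine ⟨by linear_combination e1 - b*(a+b)*hlen,
        by linear_combination e2 + b*(a+b)*hlen, e3⟩
  · -- SurjOn
    rintro ⟨w0, w1, w2⟩ ⟨⟨hwL, hw0, hw2⟩, hwor⟩
    simp only at hw0 hw2 hwor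
    have hwkey := key_of_L3 (a := a) (b := b) (d := d)
      (s := t + d*a*b*(a+b)) hwL
    simp only [len3] at hwkey
    by_cases hwb : w0 ≤ b
    · -- preimage via phi12⁻¹
      have hl : w0 + w1 + w2 ≤ 0 := ell_le_zero ha hb hd hBpm' hwkey hw2 hwb
      set l : ℤ := w0 + w1 + w2 with hldef
      refine ⟨(w0, w1 - a*(a+b)*l, w2 + a*(a+b)*l), ?_, ?_⟩
      · have hlv : len3 (w0, w1 - a*(a+b)*l, w2 + a*(a+b)*l) = l := by
          simp only [len3]; ring
        have hphi : phi12 a b (w0, w1 - a*(a+b)*l, w2 + a*(a+b)*l) = (w0, w1, w2) := by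
          rw [phi12_eq, hlv]; simp only [Prod.mk.injEq]
          refine ⟨trivial, by ring, by ring⟩
        have hvL : pi3 a b d t (w0, w1 - a*(a+b)*l, w2 + a*(a+b)*l) = 0 := by
          rw [← pi3_phi12 a b d t, hphi]; exact hwL
        have hvkey := key_of_L3 (a := a) (b := b) (d := d) (s := t) hvL
        rw [hlv] at hvkey
        simp only at hvkey
        have hv2 : 0 ≤ w2 + a*(a+b)*l := by
          have hdb : (0:ℤ) < d * b := by positivity
          have heqn : d * b * (w2 + a*(a+b)*l) = d*a*w0 - t*l := by
            linear_combination hvkey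
          have h1 : 0 ≤ d * b * (w2 + a*(a+b)*l) := by
            rw [heqn]
            have h2 : 0 ≤ d*a*w0 := mul_nonneg (by positivity) hw0
            have h3 : t*l ≤ 0 := mul_nonpos_of_nonneg_of_nonpos (le_of_lt ht0) hl
            linarith only [h2, h3]
          exact (mul_nonneg_iff_of_pos_left hdb).mp h1
        exact ⟨⟨hvL, hw0, hv2⟩, Or.inl hwb⟩
      · have hlv : len3 (w0, w1 - a*(a+b)*l, w2 + a*(a+b)*l) = l := by
          simp only [len3]; ring
        unfold phihat
        rw [if_pos (show (w0, w1 - a*(a+b)*l, w2 + a*(a+b)*l).1 ≤ b from hwb)]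
        rw [phi12_eq, hlv]; simp only [Prod.mk.injEq]
        refine ⟨trivial, by ring, by ring⟩
    · -- preimage via phi01⁻¹
      have hwa : w2 ≤ a := hwor.resolve_left hwb
      have hl : 0 ≤ w0 + w1 + w2 := ell_ge_zero ha hb hd hBpm' hwkey hw0 hwa
      set l : ℤ := w0 + w1 + w2 with hldef
      have hlv : len3 (w0 - b*(a+b)*l, w1 + b*(a+b)*l, w2) = l := by
        simp only [len3]; ring
      have hphi : phi01 a b (w0 - b*(a+b)*l, w1 + b*(a+b)*l, w2) = (w0, w1, w2) := by
        rw [phi01_eq, hlv]; simp only [Prod.mk.injEq]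
        refine ⟨by ring, by ring, trivial⟩
      have hvL : pi3 a b d t (w0 - b*(a+b)*l, w1 + b*(a+b)*l, w2) = 0 := by
        rw [← pi3_phi01 a b d t, hphi]; exact hwL
      have hvkey := key_of_L3 (a := a) (b := b) (d := d) (s := t) hvL
      rw [hlv] at hvkey
      simp only at hvkey
      have hda : (0:ℤ) < d * a := by positivity
      have heqn : d * a * (w0 - b*(a+b)*l) = t*l + d*b*w2 := by
        linear_combination -hvkey
      have hw2' : 0 ≤ d*b*w2 := mul_nonneg (by positivity) hw2
      have hv0 : 0 ≤ w0 - b*(a+b)*l := by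
        have h1 : 0 ≤ d * a * (w0 - b*(a+b)*l) := by
          rw [heqn]
          have h3 : 0 ≤ t*l := mul_nonneg (le_of_lt ht0) hl
          linarith only [h3, hw2']
        exact (mul_nonneg_iff_of_pos_left hda).mp h1
      have hvb : b < w0 - b*(a+b)*l := by
        rcases eq_or_lt_of_le hl with heq | hlt
        · have hl0 : l = 0 := heq.symm
          rw [hl0]; simp; omega
        · have h1l : 1 ≤ l := hlt
          have h1 : d * a * b < d * a * (w0 - b*(a+b)*l) := by
            rw [heqn]
            have h3 : t * 1 ≤ t * l := mul_le_mul_of_nonneg_left h1l (le_of_lt ht0)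
            linarith only [h3, hw2', hBpm]
          exact lt_of_mul_lt_mul_left h1 (le_of_lt hda)
      refine ⟨(w0 - b*(a+b)*l, w1 + b*(a+b)*l, w2), ⟨⟨hvL, hv0, hw2⟩, Or.inr hwa⟩, ?_⟩
      unfold phihat
      rw [if_neg (show ¬ (w0 - b*(a+b)*l, w1 + b*(a+b)*l, w2).1 ≤ b by simp only; omega)]
      exact hphi
end

section
/- (a) Every nonzero v ∈ O⁺_t satisfies ℓ(v) > 0. (b) Every v ∈ O⁺_t with ℓ(v) = d is irreducible in O⁺_t. (c) Every v ∈ O⁺_t that is reducible in O⁺_t satisfies ℓ(v) ≥ 2d. -/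
lemma ppn_key (a b d t : ℤ) (ha : 1 ≤ a) (hb : 1 ≤ b) (hd : 1 ≤ d)
    (ht : d * a < t) (htd : Int.gcd t d = 1) :
    ∀ v ∈ OPlus a b d t, v ≠ 0 → d ≤ len3 v := by
  rintro ⟨v0, v1, v2⟩ ⟨hπ, h0, h1⟩ hne
  simp only [L3, pi3, Set.mem_setOf_eq] at hπ
  simp only at h0 h1
  have hda : 1 ≤ d * a := one_le_mul_of_one_le_of_one_le hd ha
  have htpos : 0 < t := by linarith
  have hkey : t * (v0 + v1 + v2) = d * (a * v0 - b * v2) := by linear_combination hπ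
  have hl : 0 < v0 + v1 + v2 := by
    by_contra hle
    push_neg at hle
    have hX : a * v0 - b * v2 ≤ 0 := by nlinarith
    have hv2 : 0 ≤ v2 := by nlinarith
    have : v0 = 0 ∧ v1 = 0 ∧ v2 = 0 := by omega
    exact hne (by simp [Prod.ext_iff, this.1, this.2.1, this.2.2])
  have hcop : IsCoprime d t := by
    rw [Int.isCoprime_iff_gcd_eq_one, Int.gcd_comm]; exact htd
  have hdvd : d ∣ (v0 + v1 + v2) :=
    hcop.dvd_of_dvd_mul_left ⟨a * v0 - b * v2, by linarith [hkey]⟩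
  have : d ∣ len3 (v0, v1, v2) := by simpa [len3] using hdvd
  exact Int.le_of_dvd (by simpa [len3] using hl) this

lemma len3_add (u w : ℤ × ℤ × ℤ) : len3 (u + w) = len3 u + len3 w := by
  simp [len3, Prod.fst_add, Prod.snd_add]; ring

theorem ppn_lengths (a b d t : ℤ) (ha : 1 ≤ a) (hb : 1 ≤ b) (hd : 1 ≤ d)
    (hab : Int.gcd a b = 1) (ht : d * a < t) (htd : Int.gcd t d = 1) :
    (∀ v ∈ OPlus a b d t, v ≠ 0 → 0 < len3 v) ∧
    (∀ v ∈ OPlus a b d t, len3 v = d →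
        v ≠ 0 ∧ ¬ Reducible (OPlus a b d t) v) ∧
    (∀ v ∈ OPlus a b d t, Reducible (OPlus a b d t) v → 2 * d ≤ len3 v) := by
  have key := ppn_key a b d t ha hb hd ht htd
  refine ⟨fun v hv hne => lt_of_lt_of_le (by linarith) (key v hv hne),
    fun v hv hlen => ⟨?_, ?_⟩,
    fun v hv hred => ?_⟩
  · rintro rfl
    simp [len3] at hlen
    omega
  · rintro ⟨u, w, hu, hw, hun, hwn, rfl⟩
    have h1 := key u hu hun
    have h2 := key w hw hwn
    rw [len3_add] at hlen
    omega
  · obtain ⟨u, w, hu, hw, hun, hwn, rfl⟩ := hred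
    have h1 := key u hu hun
    have h2 := key w hw hwn
    rw [len3_add]
    omega
end

section
/- If t > B⁺ = (b−1)*(a+b) − b*(d+1), then there exists v ∈ O⁺_t with ℓ(v) = d. -/
theorem exists_length_d_trade (a b d t : ℤ) (ha : 1 ≤ a) (hb : 1 ≤ b) (hd : 1 ≤ d)
    (hab : Int.gcd a b = 1) (ht : d * a < t) (htd : Int.gcd t d = 1)
    (hBp : (b - 1) * (a + b) - b * (d + 1) < t) :
    ∃ v ∈ OPlus a b d t, len3 v = d := by
  have hb0 : (0:ℤ) < b := by linarith
  obtain ⟨u, w, huw⟩ : IsCoprime a b := Int.isCoprime_iff_gcd_eq_one.mpr hab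
  set c : ℤ := u * t with hc
  set v0 : ℤ := c % b with hv0
  have hv0nn : 0 ≤ v0 := Int.emod_nonneg c (by linarith)
  have hv0lt : v0 < b := Int.emod_lt_of_pos c hb0
  have hdvd : b ∣ a * v0 - t := by
    have : a * v0 - t = (-(w * t) - a * (c / b)) * b := by
      have h1 : v0 = c - b * (c / b) := Int.emod_def c b
      have h2 : u * a + w * b = 1 := huw
      rw [h1]; linear_combination t * h2
    exact ⟨_, by rw [this, mul_comm]⟩
  obtain ⟨v2, hv2⟩ := hdvd
  refine ⟨(v0, d - v0 - v2, v2), ⟨?_, hv0nn, ?_⟩, ?_⟩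
  · show pi3 a b d t _ = 0
    simp only [pi3]
    linear_combination (-d) * hv2
  · -- 0 ≤ d - v0 - v2
    have hbv : b * v2 = a * v0 - t := by linarith
    have key : b * (v0 + v2) < b * (d + 1) := by nlinarith
    have : v0 + v2 < d + 1 := lt_of_mul_lt_mul_left key (le_of_lt hb0)
    simp only []
    linarith
  · simp only [len3]; ring
end

section
/- Let t = (b−1)*(a+b) − b*(d+1). Then there is no v = (v0, v1, v2) ∈ ℤ³ with v0 ≥ 0, v1 ≥ 0, π_t(v) = 0, and ℓ(v) = d. In particular, the bound B⁺ = (b−1)*(a+b) − b*(d+1) in the previous existence statement is sharp. -/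
theorem no_length_d_trade_at_bound (a b d : ℤ) (ha : 1 ≤ a) (hb : 2 ≤ b)
    (hd : 1 ≤ d) (hab : Int.gcd a b = 1) :
    ¬ ∃ v : ℤ × ℤ × ℤ, 0 ≤ v.1 ∧ 0 ≤ v.2.1 ∧
        pi3 a b d ((b - 1) * (a + b) - b * (d + 1)) v = 0 ∧ len3 v = d := by
  rintro ⟨⟨v0, v1, v2⟩, h0, h1, hpi, hlen⟩
  simp only [pi3, len3] at hpi hlen h0 h1
  have hd0 : d ≠ 0 := by omega
  have h2 : d * (((b - 1) * (a + b) - b * (d + 1)) - a * v0 + b * v2) = 0 := by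
    linear_combination hpi - ((b - 1) * (a + b) - b * (d + 1)) * hlen
  have key : ((b - 1) * (a + b) - b * (d + 1)) - a * v0 + b * v2 = 0 := by
    rcases mul_eq_zero.mp h2 with h | h
    · exact absurd h hd0
    · exact h
  have hdvd : b ∣ a * (v0 + 1) := ⟨a + b - d - 2 + v2, by linarith [key]⟩
  have hcop : IsCoprime b a := (Int.isCoprime_iff_gcd_eq_one.mpr hab).symm
  obtain ⟨m, hm⟩ := hcop.dvd_of_dvd_mul_left hdvd
  have hm1 : 1 ≤ m := by nlinarith
  have hv1 : b * v1 = b * ((a + b) * (1 - m) - 1) := by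
    linear_combination b * hlen - key - (a + b) * hm
  nlinarith [mul_nonneg (by linarith : (0:ℤ) ≤ b) h1,
    mul_nonneg (by linarith : (0:ℤ) ≤ a + b) (by linarith : (0:ℤ) ≤ m - 1),
    mul_nonneg (mul_nonneg (by linarith : (0:ℤ) ≤ b) (by linarith : (0:ℤ) ≤ a + b)) (by linarith : (0:ℤ) ≤ m - 1)]
end

section
/- Suppose t > B⁺ = (b−1)*(a+b) − b*(d+1). If v = (v0, v1, v2) ∈ O⁺_t satisfies v0 ≥ b, v1 ≥ a+b, and ℓ(v) > d, then v is reducible in O⁺_t. -/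
lemma split_helper (a b d t : ℤ) (hd : 1 ≤ d) (v : ℤ × ℤ × ℤ)
    (hv : v ∈ OPlus a b d t) (hl : d < len3 v) (u0 u1 : ℤ)
    (hu00 : 0 ≤ u0) (hu10 : 0 ≤ u1) (hu0v : u0 ≤ v.1) (hu1v : u1 ≤ v.2.1)
    (heq : (a + b) * u0 + b * u1 = t + d * b) :
    Reducible (OPlus a b d t) v := by
  obtain ⟨hvL, hv0, hv1⟩ := hv
  have hπv : (t - d * a) * v.1 + t * v.2.1 + (t + d * b) * v.2.2 = 0 := hvL
  refine ⟨(u0, u1, d - u0 - u1), (v.1 - u0, v.2.1 - u1, v.2.2 - (d - u0 - u1)),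
    ⟨?_, hu00, hu10⟩, ⟨?_, by simp only [Prod.fst]; linarith, by simp only [Prod.snd, Prod.fst]; linarith⟩, ?_, ?_, ?_⟩
  · show pi3 a b d t _ = 0
    simp only [pi3]
    linear_combination (-d) * heq
  · show pi3 a b d t _ = 0
    simp only [pi3]
    linear_combination hπv + d * heq
  · intro h
    rw [Prod.ext_iff, Prod.ext_iff] at h
    simp only [Prod.fst, Prod.snd] at h
    obtain ⟨e0, e1, e2⟩ := h
    simp only [Prod.fst_zero, Prod.snd_zero] at *
    omega
  · intro h
    rw [Prod.ext_iff, Prod.ext_iff] at h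
    obtain ⟨e0, e1, e2⟩ := h
    simp only [Prod.fst_zero, Prod.snd_zero, Prod.fst, Prod.snd] at e0 e1 e2
    have : len3 v = d := by simp only [len3]; omega
    omega
  · rw [Prod.ext_iff, Prod.ext_iff]
    refine ⟨by simp, by simp, by simp⟩

theorem ppn_reducible (a b d t : ℤ) (ha : 1 ≤ a) (hb : 1 ≤ b) (hd : 1 ≤ d)
    (hab : Int.gcd a b = 1) (ht : d * a < t) (htd : Int.gcd t d = 1)
    (hBp : (b - 1) * (a + b) - b * (d + 1) < t)
    (v : ℤ × ℤ × ℤ) (hv : v ∈ OPlus a b d t)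
    (h0 : b ≤ v.1) (h1 : a + b ≤ v.2.1) (hl : d < len3 v) :
    Reducible (OPlus a b d t) v := by
  set N : ℤ := t + d * b with hN
  have hd0 : (0 : ℤ) < d := by linarith
  have hb0 : (0 : ℤ) < b := by linarith
  have hab0 : (0 : ℤ) < a + b := by linarith
  have hda : 0 < d * a := mul_pos hd0 (by linarith)
  have hdb : 0 < d * b := mul_pos hd0 hb0
  have hN0 : 0 < N := by rw [hN]; linarith
  obtain ⟨hvL, hv0, hv1⟩ := hv
  have hπv : (t - d * a) * v.1 + t * v.2.1 + (t + d * b) * v.2.2 = 0 := hvL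
  have key : d * ((a + b) * v.1 + b * v.2.1) = N * len3 v := by
    simp only [len3, hN]; linear_combination (-1 : ℤ) * hπv
  -- d ∣ len3 v
  have hcopt : IsCoprime t d := Int.isCoprime_iff_gcd_eq_one.mpr htd
  have hcop : IsCoprime d N := by
    have := (hcopt.symm).add_mul_left_right b
    simpa [hN] using this
  have hdvd : d ∣ N * len3 v := ⟨(a + b) * v.1 + b * v.2.1, key.symm⟩
  have hdl : d ∣ len3 v := hcop.dvd_of_dvd_mul_left hdvd
  obtain ⟨m, hm⟩ := hdl
  have hm2 : 2 ≤ m := by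
    have h1m : d * 1 < d * m := by rw [mul_one]; rw [hm] at hl; linarith
    have := lt_of_mul_lt_mul_left h1m hd0.le
    omega
  have hsum : 2 * N ≤ (a + b) * v.1 + b * v.2.1 := by
    have h1' : (a + b) * v.1 + b * v.2.1 = N * m := by
      have : d * ((a + b) * v.1 + b * v.2.1) = d * (N * m) := by
        rw [key, hm]; ring
      exact mul_left_cancel₀ (ne_of_gt hd0) this
    have h2 : N * 2 ≤ N * m := mul_le_mul_of_nonneg_left hm2 hN0.le
    linarith
  -- Bezout for a, b
  obtain ⟨x, y, hxy⟩ := Int.isCoprime_iff_gcd_eq_one.mpr hab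
  by_cases hc : N ≤ b * v.2.1
  · -- use u0 = r ∈ [0, b)
    obtain ⟨r, k, hr0, hrb, hk⟩ : ∃ r k : ℤ, 0 ≤ r ∧ r < b ∧ x * N - r = b * k :=
      ⟨(x * N) % b, (x * N) / b, Int.emod_nonneg _ (ne_of_gt hb0),
        Int.emod_lt_of_pos _ hb0, by have := Int.emod_add_mul_ediv (x * N) b; linarith⟩
    obtain ⟨u1, hu1⟩ : ∃ u1 : ℤ, b * u1 = N - (a + b) * r :=
      ⟨N * (y - x) + (a + b) * k, by linear_combination N * hxy - (a + b) * hk⟩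
    have hu1nn : 0 ≤ u1 := by
      have h1 : -b < b * u1 := by
        rw [hu1]
        linarith [mul_nonneg hab0.le (by linarith : (0:ℤ) ≤ b - 1 - r)]
      by_contra h
      push_neg at h
      linarith [mul_nonneg hb0.le (by linarith : (0:ℤ) ≤ -1 - u1)]
    have hu1le : u1 ≤ v.2.1 := by
      have h2 : b * u1 ≤ b * v.2.1 := by
        rw [hu1]; linarith [mul_nonneg hab0.le hr0]
      exact le_of_mul_le_mul_left h2 hb0
    exact split_helper a b d t hd v ⟨hvL, hv0, hv1⟩ hl r u1 hr0 hu1nn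
      (by linarith) hu1le (by linarith)
  · push_neg at hc
    -- use u1 = s ∈ [0, a+b)
    obtain ⟨s, k, hs0, hsab, hk⟩ : ∃ s k : ℤ, 0 ≤ s ∧ s < a + b ∧ (y - x) * N - s = (a + b) * k :=
      ⟨((y - x) * N) % (a + b), ((y - x) * N) / (a + b), Int.emod_nonneg _ (ne_of_gt hab0),
        Int.emod_lt_of_pos _ hab0, by have := Int.emod_add_mul_ediv ((y - x) * N) (a + b); linarith⟩
    obtain ⟨u0, hu0⟩ : ∃ u0 : ℤ, (a + b) * u0 = N - b * s :=
      ⟨N * x + b * k, by linear_combination N * hxy - b * hk⟩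
    have hu0nn : 0 ≤ u0 := by
      have h1 : -(a + b) < (a + b) * u0 := by
        rw [hu0]
        linarith [mul_nonneg hb0.le (by linarith : (0:ℤ) ≤ a + b - 1 - s)]
      by_contra h
      push_neg at h
      linarith [mul_nonneg hab0.le (by linarith : (0:ℤ) ≤ -1 - u0)]
    have hu0le : u0 ≤ v.1 := by
      have h2 : (a + b) * u0 < (a + b) * v.1 := by
        rw [hu0]; linarith [mul_nonneg hb0.le hs0]
      exact le_of_lt (lt_of_mul_lt_mul_left h2 (le_of_lt hab0))
    exact split_helper a b d t hd v ⟨hvL, hv0, hv1⟩ hl u0 s hu0nn hs0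
      hu0le (by linarith) (by linarith)
end

section
/- Suppose t > B⁺ = (b−1)*(a+b) − b*(d+1). Then the cardinality of the Hilbert basis H(O⁺_{t+ρ}) equals the cardinality of H(O⁺_t) plus d*a. -/
/-!
Projecting `v ↦ (v0, v1)` identifies `O⁺_s` with the monoid of `(x, y) ∈ ℕ²` such that
`m = s + d b` divides the weight `(a + b) x + b y`, because
`π_s(v) = m ℓ(v) - d ((a + b) v0 + b v1)` and `gcd(m, d) = 1`; the step `t ↦ t + ρ` becomes
`m ↦ m + d a b (a + b)`.

Above the bound `(b - 1)(a + b) - b`, an irreducible element of this monoid either has weight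
exactly `m`, and these `J + 1` points lie on the segment from `(x0, yJ + J (a + b))` to
`(x0 + J b, yJ)`, or it has `x < x0` or `y < yJ`: otherwise it dominates a point of the segment.
Raising `m` by `n a b (a + b)` keeps `x0` and `yJ` and raises `J` by `n a`, while
`v ↦ v + (weight v / m) (0, n a (a + b))` and `v ↦ v + (weight v / m) (n a b, 0)` are additive
bijections between the elements with `x < x0`, resp. `y < yJ`, of the two monoids, so they match
the irreducible ones. With `n = d` the Hilbert basis grows by exactly `d a`.
-/

section HilbertBasis

variable {M N : Type*}

def hilbertBasis [Add M] [Zero M] (S : Set M) : Set M :=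
  {v ∈ S | v ≠ 0 ∧ ¬ ∃ u w : M, u ∈ S ∧ w ∈ S ∧ u ≠ 0 ∧ w ≠ 0 ∧ v = u + w}

theorem HB_eq_hilbertBasis (O : Set (ℤ × ℤ × ℤ)) : HB O = hilbertBasis O := rfl

theorem hilbertBasis_subset [Add M] [Zero M] (S : Set M) : hilbertBasis S ⊆ S :=
  fun _ hv => hv.1

theorem eq_of_mem_hilbertBasis_of_sub_mem [AddCommGroup M] {S : Set M} {u v : M}
    (hv : v ∈ hilbertBasis S) (hu : u ∈ S) (hu0 : u ≠ 0) (hvu : v - u ∈ S) : u = v := by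
  by_contra hne
  exact hv.2.2
    ⟨u, v - u, hu, hvu, hu0, sub_ne_zero.mpr (Ne.symm hne), (add_sub_cancel u v).symm⟩

variable [Add M] [Zero M] [Add N] [Zero N] {S C : Set M} {T D : Set N} {f : M → N} {g : N → M}

theorem mapsTo_hilbertBasis_inter (hf : Set.MapsTo f (S ∩ C) (T ∩ D))
    (hg : Set.MapsTo g (T ∩ D) (S ∩ C)) (hfg : Set.InvOn g f (S ∩ C) (T ∩ D))
    (hf0 : f 0 = 0) (hg0 : g 0 = 0) (hg_add : ∀ p ∈ T, ∀ q ∈ T, g (p + q) = g p + g q)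
    (hD : ∀ p ∈ T, ∀ q ∈ T, p + q ∈ D → p ∈ D ∧ q ∈ D) :
    Set.MapsTo f (hilbertBasis S ∩ C) (hilbertBasis T ∩ D) := by
  rintro v ⟨⟨hvS, hv0, hirr⟩, hvC⟩
  obtain ⟨hfvT, hfvD⟩ := hf ⟨hvS, hvC⟩
  have hgf : g (f v) = v := hfg.1 ⟨hvS, hvC⟩
  refine ⟨⟨hfvT, fun h => hv0 (by rw [← hgf, h, hg0]), ?_⟩, hfvD⟩
  rintro ⟨p, q, hp, hq, hp0, hq0, hpq⟩
  obtain ⟨hpD, hqD⟩ := hD p hp q hq (hpq ▸ hfvD)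
  refine hirr ⟨g p, g q, (hg ⟨hp, hpD⟩).1, (hg ⟨hq, hqD⟩).1, ?_, ?_, ?_⟩
  · exact fun h => hp0 (by rw [← hfg.2 ⟨hp, hpD⟩, h, hf0])
  · exact fun h => hq0 (by rw [← hfg.2 ⟨hq, hqD⟩, h, hf0])
  · rw [← hg_add p hp q hq, ← hpq, hgf]

theorem ncard_hilbertBasis_inter_eq (hf : Set.MapsTo f (S ∩ C) (T ∩ D))
    (hg : Set.MapsTo g (T ∩ D) (S ∩ C)) (hfg : Set.InvOn g f (S ∩ C) (T ∩ D))
    (hf0 : f 0 = 0) (hg0 : g 0 = 0) (hf_add : ∀ u ∈ S, ∀ w ∈ S, f (u + w) = f u + f w)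
    (hg_add : ∀ p ∈ T, ∀ q ∈ T, g (p + q) = g p + g q)
    (hC : ∀ u ∈ S, ∀ w ∈ S, u + w ∈ C → u ∈ C ∧ w ∈ C)
    (hD : ∀ p ∈ T, ∀ q ∈ T, p + q ∈ D → p ∈ D ∧ q ∈ D) :
    (hilbertBasis S ∩ C).ncard = (hilbertBasis T ∩ D).ncard :=
  Set.BijOn.ncard_eq <| Set.InvOn.bijOn
    (hfg.mono (Set.inter_subset_inter_left C (hilbertBasis_subset S))
      (Set.inter_subset_inter_left D (hilbertBasis_subset T)))
    (mapsTo_hilbertBasis_inter hf hg hfg hf0 hg0 hg_add hD)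
    (mapsTo_hilbertBasis_inter hg hf hfg.symm hg0 hf0 hf_add hC)

end HilbertBasis

section LevelShift

variable {M : Type*} [AddCommGroup M]

def levelShift (σ : M →+ ℤ) (m : ℤ) (e v : M) : M := v + (σ v / m) • e

variable {σ : M →+ ℤ} {m m' : ℤ} {e u v w : M}

theorem levelShift_zero : levelShift σ m e 0 = 0 := by
  simp [levelShift]

theorem map_levelShift (hv : m ∣ σ v) : σ (levelShift σ m e v) = (m + σ e) * (σ v / m) := by
  have hk := Int.mul_ediv_cancel' hv
  simp only [levelShift, map_add, map_zsmul, smul_eq_mul]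
  linear_combination -hk

theorem dvd_map_levelShift (hv : m ∣ σ v) : m + σ e ∣ σ (levelShift σ m e v) :=
  ⟨_, map_levelShift hv⟩

theorem levelShift_levelShift (hv : m ∣ σ v) (hm : m + σ e = m') (hm' : m' ≠ 0) :
    levelShift σ m' (-e) (levelShift σ m e v) = v := by
  subst hm
  rw [levelShift, map_levelShift hv, Int.mul_ediv_cancel_left _ hm', levelShift, smul_neg,
    add_neg_cancel_right]

theorem levelShift_add (hu : m ∣ σ u) :
    levelShift σ m e (u + w) = levelShift σ m e u + levelShift σ m e w := by
  simp only [levelShift, map_add, Int.add_ediv_of_dvd_left hu, add_smul]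
  abel

end LevelShift

section DvdCone

def weight (a b : ℤ) : ℤ × ℤ →+ ℤ :=
  AddMonoidHom.mk' (fun v => (a + b) * v.1 + b * v.2) fun u v => by
    simp only [Prod.fst_add, Prod.snd_add]
    ring

@[simp]
theorem weight_apply (a b : ℤ) (v : ℤ × ℤ) : weight a b v = (a + b) * v.1 + b * v.2 := rfl

def dvdCone (a b m : ℤ) : Set (ℤ × ℤ) := {v | 0 ≤ v ∧ m ∣ weight a b v}

variable {a b m : ℤ} {u v : ℤ × ℤ}

theorem prod_nonneg_iff : 0 ≤ v ↔ 0 ≤ v.1 ∧ 0 ≤ v.2 := Iff.rfl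

def levelOne (a b m : ℤ) : Set (ℤ × ℤ) := {v ∈ dvdCone a b m | weight a b v = m}

theorem weight_nonneg (ha : 0 < a) (hb : 0 < b) (hv : 0 ≤ v) : 0 ≤ weight a b v := by
  obtain ⟨h1, h2⟩ := prod_nonneg_iff.mp hv
  have := mul_nonneg (add_pos ha hb).le h1
  have := mul_nonneg hb.le h2
  simp only [weight_apply]
  linarith

theorem weight_pos (ha : 0 < a) (hb : 0 < b) (hv : 0 ≤ v) (hv0 : v ≠ 0) : 0 < weight a b v := by
  obtain ⟨h1, h2⟩ := prod_nonneg_iff.mp hv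
  by_contra! hle
  simp only [weight_apply] at hle
  have hx : v.1 = 0 := by nlinarith
  have hy : v.2 = 0 := by nlinarith
  exact hv0 (Prod.ext hx hy)

theorem le_weight (ha : 0 < a) (hb : 0 < b) (hv : v ∈ dvdCone a b m) (hv0 : v ≠ 0) :
    m ≤ weight a b v :=
  Int.le_of_dvd (weight_pos ha hb hv.1 hv0) hv.2

theorem two_mul_le_weight (ha : 0 < a) (hb : 0 < b) (hm : 0 < m) (hv : v ∈ dvdCone a b m)
    (hv0 : v ≠ 0) (hvm : weight a b v ≠ m) : 2 * m ≤ weight a b v := by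
  obtain ⟨c, hc⟩ := hv.2
  have hc1 : 1 ≤ c := by
    by_contra! hc1
    nlinarith [weight_pos ha hb hv.1 hv0]
  have hc2 : 2 ≤ c := by
    by_contra! hc2
    exact hvm (by rw [hc, show c = 1 by omega, mul_one])
  nlinarith

theorem sub_mem_dvdCone (hu : u ∈ dvdCone a b m) (hv : v ∈ dvdCone a b m) (huv : u ≤ v) :
    v - u ∈ dvdCone a b m :=
  ⟨sub_nonneg.mpr huv, by rw [map_sub]; exact dvd_sub hv.2 hu.2⟩

theorem eq_of_le_of_mem_hilbertBasis (hv : v ∈ hilbertBasis (dvdCone a b m))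
    (hu : u ∈ dvdCone a b m) (hu0 : u ≠ 0) (huv : u ≤ v) : u = v :=
  eq_of_mem_hilbertBasis_of_sub_mem hv hu hu0 (sub_mem_dvdCone hu hv.1 huv)

theorem mem_hilbertBasis_of_weight_eq (ha : 0 < a) (hb : 0 < b) (hm : 0 < m)
    (hv : v ∈ dvdCone a b m) (hvm : weight a b v = m) : v ∈ hilbertBasis (dvdCone a b m) := by
  refine ⟨hv, fun h => hm.ne' (by rw [← hvm, h, map_zero]), ?_⟩
  rintro ⟨u, w, hu, hw, hu0, hw0, rfl⟩
  rw [map_add] at hvm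
  linarith [le_weight ha hb hu hu0, le_weight ha hb hw hw0]

theorem hilbertBasis_dvdCone_finite (ha : 0 < a) (hb : 0 < b) (hm : 0 < m) :
    (hilbertBasis (dvdCone a b m)).Finite := by
  refine (Set.finite_Icc 0 (b * m, (a + b) * m)).subset fun v hv => ⟨hv.1.1, ?_⟩
  obtain ⟨h1, h2⟩ := prod_nonneg_iff.mp hv.1.1
  have hbm : 0 < b * m := by positivity
  have habm : 0 < (a + b) * m := by positivity
  refine Prod.le_def.mpr ⟨?_, ?_⟩
  · by_contra! hlt
    have := eq_of_le_of_mem_hilbertBasis hv (u := (b * m, 0))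
      ⟨prod_nonneg_iff.mpr ⟨hbm.le, le_rfl⟩,
        ⟨(a + b) * b, by simp only [weight_apply]; ring⟩⟩
      (by simp [hbm.ne']) (Prod.le_def.mpr ⟨hlt.le, h2⟩)
    exact hlt.ne (congrArg Prod.fst this :)
  · by_contra! hlt
    have := eq_of_le_of_mem_hilbertBasis hv (u := (0, (a + b) * m))
      ⟨prod_nonneg_iff.mpr ⟨le_rfl, habm.le⟩,
        ⟨b * (a + b), by simp only [weight_apply]; ring⟩⟩
      (by simp [habm.ne']) (Prod.le_def.mpr ⟨h1, hlt.le⟩)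
    exact hlt.ne (congrArg Prod.snd this :)

end DvdCone

section Transfer

variable {a b m m' : ℤ} {e : ℤ × ℤ}

theorem ncard_hilbertBasis_dvdCone_inter_eq (ha : 0 < a) (hb : 0 < b) (hm : 0 < m) (he : 0 ≤ e)
    (hm' : m + weight a b e = m') {C : Set (ℤ × ℤ)} (hC : IsLowerSet C)
    (hCe : ∀ v (k : ℤ), v + k • e ∈ C ↔ v ∈ C)
    (hdown : ∀ v ∈ dvdCone a b m' ∩ C, (weight a b v / m') • e ≤ v) :
    (hilbertBasis (dvdCone a b m) ∩ C).ncard = (hilbertBasis (dvdCone a b m') ∩ C).ncard := by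
  have hm'0 : 0 < m' := hm' ▸ lt_add_of_pos_of_le hm (weight_nonneg ha hb he)
  have hback : m' + weight a b (-e) = m := by rw [map_neg, ← hm']; ring
  have hCsum :
      ∀ n, ∀ u ∈ dvdCone a b n, ∀ w ∈ dvdCone a b n, u + w ∈ C → u ∈ C ∧ w ∈ C :=
    fun _ _ hu _ hw h => ⟨hC (le_add_of_nonneg_right hw.1) h, hC (le_add_of_nonneg_left hu.1) h⟩
  refine ncard_hilbertBasis_inter_eq (f := levelShift (weight a b) m e)
    (g := levelShift (weight a b) m' (-e)) ?_ ?_ ?_ levelShift_zero levelShift_zero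
    (fun _ hu _ _ => levelShift_add hu.2) (fun _ hp _ _ => levelShift_add hp.2)
    (hCsum m) (hCsum m')
  · rintro v ⟨hv, hvC⟩
    have hk : 0 ≤ weight a b v / m := Int.ediv_nonneg (weight_nonneg ha hb hv.1) hm.le
    exact ⟨⟨add_nonneg hv.1 (smul_nonneg hk he), hm' ▸ dvd_map_levelShift hv.2⟩,
      (hCe v _).mpr hvC⟩
  · rintro v ⟨hv, hvC⟩
    refine ⟨⟨?_, hback ▸ dvd_map_levelShift hv.2⟩, ?_⟩
    · rw [levelShift, smul_neg, ← sub_eq_add_neg, sub_nonneg]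
      exact hdown v ⟨hv, hvC⟩
    · rw [levelShift, smul_neg, ← neg_smul]
      exact (hCe v _).mpr hvC
  · refine ⟨fun v hv => levelShift_levelShift hv.1.2 hm' hm'0.ne', fun v hv => ?_⟩
    have := levelShift_levelShift hv.1.2 hback hm.ne'
    rwa [neg_neg] at this

end Transfer

/-- The elements of weight `m` in `dvdCone a b m` are the points
`(x0 + j * b, yJ + (J - j) * (a + b))`, `0 ≤ j ≤ J` (`LineData.levelOne_eq`); `bound` is what
makes every other irreducible element have `x < x0` or `y < yJ`. -/
structure LineData (a b m x0 J yJ : ℤ) : Prop where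
  pos_a : 0 < a
  pos_b : 0 < b
  coprime : IsCoprime a b
  pos_m : 0 < m
  x0_nonneg : 0 ≤ x0
  x0_lt : x0 < b
  J_nonneg : 0 ≤ J
  yJ_nonneg : 0 ≤ yJ
  yJ_lt : yJ < a + b
  eq : m = (a + b) * x0 + b * ((a + b) * J + yJ)
  bound : (b - 1) * (a + b) - b < m

namespace LineData

variable {a b m x0 J yJ n : ℤ} {v : ℤ × ℤ}

theorem shift (h : LineData a b m x0 J yJ) (hn : 0 ≤ n) :
    LineData a b (m + n * (a * b * (a + b))) x0 (J + n * a) yJ := by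
  have := h.pos_a; have := h.pos_b
  have : 0 ≤ n * (a * b * (a + b)) := by positivity
  exact ⟨h.pos_a, h.pos_b, h.coprime, by linarith [h.pos_m], h.x0_nonneg, h.x0_lt,
    by nlinarith [h.J_nonneg], h.yJ_nonneg, h.yJ_lt, by rw [h.eq]; ring, by linarith [h.bound]⟩

theorem levelOne_eq (h : LineData a b m x0 J yJ) :
    levelOne a b m =
      (fun j : ℤ => (x0 + j * b, yJ + (J - j) * (a + b))) '' Set.Icc 0 J := by
  have ha := h.pos_a; have hb := h.pos_b
  ext v
  constructor
  · rintro ⟨hv, hvm⟩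
    obtain ⟨h1, h2⟩ := prod_nonneg_iff.mp hv.1
    simp only [weight_apply] at hvm
    have hdvd : b ∣ (a + b) * (v.1 - x0) :=
      ⟨(a + b) * J + yJ - v.2, by linear_combination hvm + h.eq⟩
    have hcop : IsCoprime b (a + b) := by simpa using (h.coprime.add_mul_right_left 1).symm
    obtain ⟨j, hj⟩ := hcop.dvd_of_dvd_mul_left hdvd
    have hv2 : b * v.2 = b * (yJ + (J - j) * (a + b)) := by
      linear_combination hvm - (a + b) * hj + h.eq
    replace hv2 := mul_left_cancel₀ hb.ne' hv2
    have hj0 : 0 ≤ j := by nlinarith [h.x0_lt]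
    have hjJ : j ≤ J := by nlinarith [h.yJ_lt]
    exact ⟨j, ⟨hj0, hjJ⟩, Prod.ext (by simp only; linarith) hv2.symm⟩
  · rintro ⟨j, ⟨hj0, hjJ⟩, rfl⟩
    have hw : weight a b (x0 + j * b, yJ + (J - j) * (a + b)) = m := by
      simp only [weight_apply]; rw [h.eq]; ring
    refine ⟨⟨prod_nonneg_iff.mpr ⟨?_, ?_⟩, hw ▸ dvd_refl _⟩, hw⟩
    · nlinarith [h.x0_nonneg]
    · nlinarith [h.yJ_nonneg]

theorem ncard_levelOne (h : LineData a b m x0 J yJ) :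
    ((levelOne a b m).ncard : ℤ) = J + 1 := by
  have hinj : Set.InjOn (fun j : ℤ => (x0 + j * b, yJ + (J - j) * (a + b))) (Set.Icc 0 J) :=
    fun i _ j _ hij => mul_right_cancel₀ h.pos_b.ne' (add_left_cancel (congrArg Prod.fst hij))
  rw [h.levelOne_eq, hinj.ncard_image, ← Finset.coe_Icc, Set.ncard_coe_finset, Int.card_Icc,
    sub_zero, Int.toNat_of_nonneg (by linarith [h.J_nonneg])]

theorem exists_point_le (h : LineData a b m x0 J yJ) (hv1 : x0 ≤ v.1) (hv2 : yJ ≤ v.2)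
    (hvm : m + ((b - 1) * (a + b) - b) < weight a b v) :
    ∃ j ∈ Set.Icc 0 J, (x0 + j * b, yJ + (J - j) * (a + b)) ≤ v := by
  have ha := h.pos_a; have hb := h.pos_b
  set q := (v.1 - x0) / b
  have hq := Int.mul_ediv_add_emod (v.1 - x0) b
  have hr0 := Int.emod_nonneg (v.1 - x0) hb.ne'
  have hrb := Int.emod_lt_of_pos (v.1 - x0) hb
  have hq0 : 0 ≤ q := Int.ediv_nonneg (by linarith) hb.le
  rcases le_or_gt J q with hJq | hqJ
  · refine ⟨J, ⟨h.J_nonneg, le_rfl⟩, Prod.le_def.mpr ⟨?_, by simpa using hv2⟩⟩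
    nlinarith
  · refine ⟨q, ⟨hq0, hqJ.le⟩, Prod.le_def.mpr ⟨by simp only; nlinarith, ?_⟩⟩
    -- otherwise `v` lies strictly below the next point of the line, so its weight is too small
    by_contra! hlt
    simp only [weight_apply] at hvm
    have hx : (a + b) * v.1 ≤ (a + b) * (x0 + q * b + b - 1) := by nlinarith
    have hy : b * v.2 ≤ b * (yJ + (J - q) * (a + b) - 1) := by nlinarith
    nlinarith [h.eq]

theorem hilbertBasis_eq_union (h : LineData a b m x0 J yJ) :
    hilbertBasis (dvdCone a b m) =
      hilbertBasis (dvdCone a b m) ∩ {v | v.1 < x0} ∪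
        hilbertBasis (dvdCone a b m) ∩ {v | v.2 < yJ} ∪ levelOne a b m := by
  have ha := h.pos_a; have hb := h.pos_b; have hm := h.pos_m
  refine subset_antisymm (fun v hv => ?_) (Set.union_subset (Set.union_subset
    Set.inter_subset_left Set.inter_subset_left)
    fun v hv => mem_hilbertBasis_of_weight_eq ha hb hm hv.1 hv.2)
  by_cases hvm : weight a b v = m
  · exact Or.inr ⟨hv.1, hvm⟩
  by_contra hnot
  simp only [Set.mem_union, Set.mem_inter_iff, Set.mem_ofPred_eq, not_or, not_and, not_lt] at hnot
  obtain ⟨⟨hv1, hv2⟩, -⟩ := hnot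
  obtain ⟨j, hj, hle⟩ := h.exists_point_le (hv1 hv) (hv2 hv)
    (by linarith [two_mul_le_weight ha hb hm hv.1 hv.2.1 hvm, h.bound])
  have hp : (x0 + j * b, yJ + (J - j) * (a + b)) ∈ levelOne a b m := by
    rw [h.levelOne_eq]
    exact ⟨j, hj, rfl⟩
  have hp0 : (x0 + j * b, yJ + (J - j) * (a + b)) ≠ 0 := fun h0 => by
    have := hp.2
    rw [h0, map_zero] at this
    exact hm.ne this
  exact hvm (eq_of_le_of_mem_hilbertBasis hv hp.1 hp0 hle ▸ hp.2)

theorem ncard_hilbertBasis (h : LineData a b m x0 J yJ) :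
    ((hilbertBasis (dvdCone a b m)).ncard : ℤ) =
      (hilbertBasis (dvdCone a b m) ∩ {v | v.1 < x0}).ncard +
        (hilbertBasis (dvdCone a b m) ∩ {v | v.2 < yJ}).ncard + (J + 1) := by
  have ha := h.pos_a; have hb := h.pos_b; have hm := h.pos_m
  have hfin := hilbertBasis_dvdCone_finite ha hb hm
  have hLR : Disjoint (hilbertBasis (dvdCone a b m) ∩ {v | v.1 < x0})
      (hilbertBasis (dvdCone a b m) ∩ {v | v.2 < yJ}) := by
    refine Set.disjoint_left.mpr fun v ⟨hv, hv1⟩ ⟨_, hv2⟩ => ?_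
    have hw := le_weight ha hb hv.1 hv.2.1
    simp only [weight_apply, Set.mem_ofPred_eq] at hw hv1 hv2
    have hx : (a + b) * v.1 ≤ (a + b) * (x0 - 1) := by nlinarith
    have hy : b * v.2 ≤ b * (yJ - 1) := by nlinarith
    have hJ : 0 ≤ b * ((a + b) * J) := by have := h.J_nonneg; positivity
    linarith [h.eq]
  have hLRP : Disjoint (hilbertBasis (dvdCone a b m) ∩ {v | v.1 < x0} ∪
      hilbertBasis (dvdCone a b m) ∩ {v | v.2 < yJ}) (levelOne a b m) := by
    rw [h.levelOne_eq]
    rintro _ hL hP v hv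
    obtain ⟨j, ⟨hj0, hjJ⟩, rfl⟩ := hP hv
    rcases hL hv with ⟨-, hv'⟩ | ⟨-, hv'⟩ <;> simp only [Set.mem_ofPred_eq] at hv' <;>
      nlinarith
  conv_lhs => rw [h.hilbertBasis_eq_union]
  rw [Set.ncard_union_eq hLRP ((hfin.subset Set.inter_subset_left).union
      (hfin.subset Set.inter_subset_left))
      (hfin.subset fun v hv => mem_hilbertBasis_of_weight_eq ha hb hm hv.1 hv.2),
    Set.ncard_union_eq hLR (hfin.subset Set.inter_subset_left) (hfin.subset Set.inter_subset_left),
    ← h.ncard_levelOne]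
  push_cast
  ring

theorem div_smul_le_of_fst_lt (h : LineData a b m x0 J yJ) (hn : 0 ≤ n)
    (hv : v ∈ dvdCone a b (m + n * (a * b * (a + b)))) (hv1 : v.1 < x0) :
    (weight a b v / (m + n * (a * b * (a + b)))) • ((0 : ℤ), n * (a * (a + b))) ≤ v := by
  have ha := h.pos_a; have hb := h.pos_b; have hm := h.pos_m
  have hk := Int.mul_ediv_cancel' hv.2
  have hk0 : 0 ≤ weight a b v / (m + n * (a * b * (a + b))) :=
    Int.ediv_nonneg (weight_nonneg ha hb hv.1) (h.shift hn).pos_m.le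
  set k := weight a b v / (m + n * (a * b * (a + b)))
  obtain ⟨h1, h2⟩ := prod_nonneg_iff.mp hv.1
  simp only [weight_apply] at hk
  refine Prod.le_def.mpr ⟨by simpa using h1, ?_⟩
  simp only [Prod.smul_snd, smul_eq_mul]
  by_contra! hlt
  rcases hk0.eq_or_lt with hk0 | hk1
  · rw [← hk0] at hlt
    linarith
  have hx : (a + b) * v.1 ≤ (a + b) * (x0 - 1) := by nlinarith
  have hy : b * v.2 ≤ b * (k * (n * (a * (a + b))) - 1) := by nlinarith
  have hmk : m ≤ m * k := le_mul_of_one_le_right hm.le hk1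
  have hmx : 0 ≤ b * ((a + b) * J + yJ) := by have := h.J_nonneg; have := h.yJ_nonneg; positivity
  linarith [h.eq]

theorem div_smul_le_of_snd_lt (h : LineData a b m x0 J yJ) (hn : 0 ≤ n)
    (hv : v ∈ dvdCone a b (m + n * (a * b * (a + b)))) (hv2 : v.2 < yJ) :
    (weight a b v / (m + n * (a * b * (a + b)))) • (n * (a * b), (0 : ℤ)) ≤ v := by
  have ha := h.pos_a; have hb := h.pos_b; have hm := h.pos_m
  have hk := Int.mul_ediv_cancel' hv.2
  have hk0 : 0 ≤ weight a b v / (m + n * (a * b * (a + b))) :=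
    Int.ediv_nonneg (weight_nonneg ha hb hv.1) (h.shift hn).pos_m.le
  set k := weight a b v / (m + n * (a * b * (a + b)))
  obtain ⟨h1, h2⟩ := prod_nonneg_iff.mp hv.1
  simp only [weight_apply] at hk
  refine Prod.le_def.mpr ⟨?_, by simpa using h2⟩
  simp only [Prod.smul_fst, smul_eq_mul]
  by_contra! hlt
  rcases hk0.eq_or_lt with hk0 | hk1
  · rw [← hk0] at hlt
    linarith
  have hx : (a + b) * v.1 ≤ (a + b) * (k * (n * (a * b)) - 1) := by nlinarith
  have hy : b * v.2 ≤ b * (a + b - 2) := by nlinarith [h.yJ_lt]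
  have hmk : m ≤ m * k := le_mul_of_one_le_right hm.le hk1
  nlinarith [h.bound]

theorem ncard_hilbertBasis_inter_fst_lt (h : LineData a b m x0 J yJ) (hn : 0 ≤ n) :
    (hilbertBasis (dvdCone a b (m + n * (a * b * (a + b)))) ∩ {v | v.1 < x0}).ncard =
      (hilbertBasis (dvdCone a b m) ∩ {v | v.1 < x0}).ncard := by
  have ha := h.pos_a; have hb := h.pos_b
  refine (ncard_hilbertBasis_dvdCone_inter_eq ha hb h.pos_m (e := (0, n * (a * (a + b))))
    (C := {v | v.1 < x0})
    (prod_nonneg_iff.mpr ⟨le_rfl, mul_nonneg hn (by positivity)⟩)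
    (by simp only [weight_apply]; ring)
    (fun u w huw hw => lt_of_le_of_lt (Prod.le_def.mp huw).1 hw)
    (by simp only [Set.mem_ofPred_eq, Prod.fst_add, Prod.smul_fst, smul_zero, add_zero,
      implies_true])
    fun v hv => h.div_smul_le_of_fst_lt hn hv.1 hv.2).symm

theorem ncard_hilbertBasis_inter_snd_lt (h : LineData a b m x0 J yJ) (hn : 0 ≤ n) :
    (hilbertBasis (dvdCone a b (m + n * (a * b * (a + b)))) ∩ {v | v.2 < yJ}).ncard =
      (hilbertBasis (dvdCone a b m) ∩ {v | v.2 < yJ}).ncard := by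
  have ha := h.pos_a; have hb := h.pos_b
  refine (ncard_hilbertBasis_dvdCone_inter_eq ha hb h.pos_m (e := (n * (a * b), 0))
    (C := {v | v.2 < yJ})
    (prod_nonneg_iff.mpr ⟨mul_nonneg hn (by positivity), le_rfl⟩)
    (by simp only [weight_apply]; ring)
    (fun u w huw hw => lt_of_le_of_lt (Prod.le_def.mp huw).2 hw)
    (by simp only [Set.mem_ofPred_eq, Prod.snd_add, Prod.smul_snd, smul_zero, add_zero,
      implies_true])
    fun v hv => h.div_smul_le_of_snd_lt hn hv.1 hv.2).symm

theorem ncard_hilbertBasis_add_mul (h : LineData a b m x0 J yJ) (hn : 0 ≤ n) :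
    ((hilbertBasis (dvdCone a b (m + n * (a * b * (a + b))))).ncard : ℤ) =
      (hilbertBasis (dvdCone a b m)).ncard + n * a := by
  rw [(h.shift hn).ncard_hilbertBasis, h.ncard_hilbertBasis, h.ncard_hilbertBasis_inter_fst_lt hn,
    h.ncard_hilbertBasis_inter_snd_lt hn]
  ring

end LineData

theorem exists_lineData {a b m : ℤ} (ha : 0 < a) (hb : 0 < b) (hab : IsCoprime a b) (hm : 0 < m)
    (hbound : (b - 1) * (a + b) - b < m) : ∃ x0 J yJ, LineData a b m x0 J yJ := by
  obtain ⟨u, w, huw⟩ := hab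
  set x0 := u * m % b
  have hx0 : 0 ≤ x0 := Int.emod_nonneg _ hb.ne'
  have hx0b : x0 < b := Int.emod_lt_of_pos _ hb
  have hdvd : b ∣ m - (a + b) * x0 :=
    ⟨m * w - x0 + a * (u * m / b),
      by linear_combination (-m) * huw - a * Int.mul_ediv_add_emod (u * m) b⟩
  obtain ⟨y, hy⟩ := hdvd
  -- `b * y > -b` because `(a + b) * x0 ≤ (a + b) * (b - 1)`
  have hy0 : 0 ≤ y := by nlinarith
  have hab0 : 0 < a + b := by linarith
  exact ⟨x0, y / (a + b), y % (a + b), ha, hb, ⟨u, w, huw⟩, hm, hx0, hx0b,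
    Int.ediv_nonneg hy0 hab0.le, Int.emod_nonneg _ hab0.ne', Int.emod_lt_of_pos _ hab0,
    by rw [Int.mul_ediv_add_emod]; linarith, hbound⟩

section Orthant

variable {a b d s m : ℤ}

theorem pi3_eq (a b d s : ℤ) (v : ℤ × ℤ × ℤ) :
    pi3 a b d s v = (s + d * b) * len3 v - d * weight a b (v.1, v.2.1) := by
  simp only [pi3, len3, weight_apply]
  ring

/-- The inverse of the projection `OPlus a b d s → dvdCone a b m`, `v ↦ (v.1, v.2.1)`. -/
def liftOPlus (a b d m : ℤ) (p : ℤ × ℤ) : ℤ × ℤ × ℤ :=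
  (p.1, p.2, d * (weight a b p / m) - p.1 - p.2)

theorem ncard_hilbertBasis_OPlus (hm : s + d * b = m) (hm0 : 0 < m) (hmd : IsCoprime m d) :
    (HB (OPlus a b d s)).ncard = (hilbertBasis (dvdCone a b m)).ncard := by
  have hpi : ∀ v, pi3 a b d s v = m * len3 v - d * weight a b (v.1, v.2.1) :=
    fun v => hm ▸ pi3_eq a b d s v
  have hlen : ∀ p ∈ dvdCone a b m, m * len3 (liftOPlus a b d m p) = d * weight a b p := by
    intro p hp
    simp only [len3, liftOPlus]
    linear_combination d * Int.mul_ediv_cancel' hp.2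
  have hproj : ∀ v ∈ OPlus a b d s, m * len3 v = d * weight a b (v.1, v.2.1) ∧
      (v.1, v.2.1) ∈ dvdCone a b m := by
    rintro v ⟨hv, hv1, hv2⟩
    have hv' : m * len3 v = d * weight a b (v.1, v.2.1) := by
      have : pi3 a b d s v = 0 := hv
      linarith [hpi v]
    exact
      ⟨hv', prod_nonneg_iff.mpr ⟨hv1, hv2⟩, hmd.dvd_of_dvd_mul_left ⟨len3 v, hv'.symm⟩⟩
  have hcard := ncard_hilbertBasis_inter_eq (S := OPlus a b d s) (T := dvdCone a b m)
    (C := Set.univ) (D := Set.univ) (f := fun v => (v.1, v.2.1)) (g := liftOPlus a b d m)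
    ?_ ?_ ?_ rfl (by simp [liftOPlus]) (fun _ _ _ _ => rfl) ?_ (by simp) (by simp)
  · simpa [HB_eq_hilbertBasis] using hcard
  · exact fun v hv => ⟨(hproj v hv.1).2, trivial⟩
  · rintro p ⟨hp, -⟩
    obtain ⟨h1, h2⟩ := prod_nonneg_iff.mp hp.1
    refine ⟨⟨?_, h1, h2⟩, trivial⟩
    show pi3 a b d s _ = 0
    rw [hpi, hlen p hp]
    exact sub_self _
  · refine ⟨fun v hv => ?_, fun p _ => rfl⟩
    obtain ⟨hv, hmem⟩ := hproj v hv.1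
    have hl := mul_left_cancel₀ hm0.ne' ((hlen _ hmem).trans hv.symm)
    simp only [len3, liftOPlus] at hl
    exact Prod.ext rfl (Prod.ext rfl (by simp only [liftOPlus]; linarith))
  · intro p hp q hq
    simp only [liftOPlus, map_add, Int.add_ediv_of_dvd_left hp.2]
    ext <;> simp only [Prod.fst_add, Prod.snd_add]
    ring

end Orthant

theorem ppn_hilbert_basis_count (a b d t : ℤ) (ha : 1 ≤ a) (hb : 1 ≤ b) (hd : 1 ≤ d)
    (hab : Int.gcd a b = 1) (ht : d * a < t) (htd : Int.gcd t d = 1)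
    (hBp : (b - 1) * (a + b) - b * (d + 1) < t) :
    ((HB (OPlus a b d (t + d * a * b * (a + b)))).ncard : ℤ) =
      ((HB (OPlus a b d t)).ncard : ℤ) + d * a := by
  have hm : 0 < t + d * b := by nlinarith
  obtain ⟨x0, J, yJ, h⟩ := exists_lineData (by omega) (by omega)
    (Int.isCoprime_iff_gcd_eq_one.mpr hab) hm (by linarith)
  have hcop : IsCoprime (t + d * b) d := (Int.isCoprime_iff_gcd_eq_one.mpr htd).add_mul_left_left b
  rw [ncard_hilbertBasis_OPlus rfl hm hcop,
    ncard_hilbertBasis_OPlus (by ring) (h.shift (by omega)).pos_m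
      (hcop.add_mul_left_left (a * b * (a + b))),
    h.ncard_hilbertBasis_add_mul (by omega)]
end

section
/- Suppose t > B⁺ = (b−1)*(a+b) − b*(d+1). Then there exist α, β ∈ O⁺_t with ℓ(α) = ℓ(β) = d such that α0 < b and β1 < a + b. -/
theorem exists_extremal_length_d_trades (a b d t : ℤ) (ha : 1 ≤ a) (hb : 1 ≤ b) (hd : 1 ≤ d)
    (hab : Int.gcd a b = 1) (ht : d * a < t) (htd : Int.gcd t d = 1)
    (hBp : (b - 1) * (a + b) - b * (d + 1) < t) :
    ∃ α ∈ OPlus a b d t, ∃ β ∈ OPlus a b d t,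
      len3 α = d ∧ len3 β = d ∧ α.1 < b ∧ β.2.1 < a + b := by
  have hb0 : 0 < b := hb
  set x := Int.gcdA a b * t with hx
  set v0 := x % b with hv0def
  have hv0nn : 0 ≤ v0 := Int.emod_nonneg x (by omega)
  have hv0lt : v0 < b := Int.emod_lt_of_pos x hb0
  -- Bezout
  have hbez : a * Int.gcdA a b + b * Int.gcdB a b = 1 := by
    have h := Int.gcd_eq_gcd_ab a b
    rw [hab] at h
    exact_mod_cast h.symm
  have hdvd : b ∣ a * v0 - t := by
    have h1 : a * x - t = -(b * (Int.gcdB a b * t)) := by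
      rw [hx]; linear_combination t * hbez
    have h2 : a * v0 - t = a * x - t - b * (a * (x / b)) := by
      rw [hv0def, Int.emod_def]; ring
    rw [h2, h1]
    exact dvd_sub ⟨-(Int.gcdB a b * t), by ring⟩ ⟨a * (x / b), rfl⟩
  set v2 := (a * v0 - t) / b with hv2def
  have hb2 : b * v2 = a * v0 - t := Int.mul_ediv_cancel' hdvd
  -- key inequality : v0 + v2 ≤ d
  have hkey : v0 + v2 ≤ d := by
    have h1 : b * (v0 + v2) = (a + b) * v0 - t := by linear_combination hb2
    have h2 : (a + b) * v0 ≤ (a + b) * (b - 1) := by nlinarith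
    have h3 : b * (v0 + v2) < b * (d + 1) := by nlinarith
    have := lt_of_mul_lt_mul_left h3 (le_of_lt hb0)
    omega
  set m := d - v0 - v2 with hmdef
  have hm : 0 ≤ m := by omega
  have hs : 0 < a + b := by omega
  set k := m / (a + b) with hkdef
  set r := m % (a + b) with hrdef
  have hk0 : 0 ≤ k := Int.ediv_nonneg hm (le_of_lt hs)
  have hr0 : 0 ≤ r := Int.emod_nonneg m (by omega)
  have hrlt : r < a + b := Int.emod_lt_of_pos m hs
  have hreq : (a + b) * k + r = d - v0 - v2 := by
    rw [hkdef, hrdef]; exact Int.mul_ediv_add_emod m (a + b)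
  have hbk : 0 ≤ b * k := mul_nonneg hb0.le hk0
  refine ⟨(v0, d - v0 - v2, v2), ⟨?_, hv0nn, show (0:ℤ) ≤ d - v0 - v2 by omega⟩,
    (v0 + b * k, r, v2 + a * k), ⟨?_, show (0:ℤ) ≤ v0 + b * k by omega, hr0⟩, ?_, ?_, hv0lt, hrlt⟩
  · show pi3 a b d t _ = 0
    simp only [pi3]
    linear_combination d * hb2
  · show pi3 a b d t _ = 0
    simp only [pi3]
    linear_combination d * hb2 + t * hreq
  · simp only [len3]; ring
  · simp only [len3]; linear_combination hreq
end
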